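/- Let ℓ be a prime and m, n ≥ 0 integers. Let u = (diag(ℓ^{a₁}, ℓ^{a₂}, ℓ^{a₃}, ℓ^{a₄}), diag(ℓ^{b₁}, ℓ^{b₂})) ∈ G(ℚ_ℓ), where a₁ ≥ a₂ ≥ a₃ ≥ a₄ ≥ 0 and b₁, b₂ ≥ 0 are integers with a₁ + a₄ = a₂ + a₃ = b₁ + b₂. Then u⁻¹ · K_{m,n} · u ∩ G(ℤ_ℓ) ⊆ K_{m,n}. -/

import Mathlib

open Pointwise

noncomputable section

/-- The ambient ring containing `G(ℚ_ℓ) = (GSp₄ ×_{GL₁} GL₂)(ℚ_ℓ)`: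
pairs of a 4×4 and a 2×2 matrix over `ℚ_ℓ`. -/
abbrev MG (p : ℕ) [Fact p.Prime] :=
  Matrix (Fin 4) (Fin 4) ℚ_[p] × Matrix (Fin 2) (Fin 2) ℚ_[p]

/-- The standard skew-symmetric matrix `J` defining `GSp₄`. -/
def Jmat (p : ℕ) [Fact p.Prime] : Matrix (Fin 4) (Fin 4) ℚ_[p] :=
  !![0, 0, 0, 1; 0, 0, 1, 0; 0, -1, 0, 0; -1, 0, 0, 0]

/-- `G(ℤ_ℓ)`: pairs `(g, h)` with `g ∈ GSp₄(ℤ_ℓ)`, `h ∈ GL₂(ℤ_ℓ)` and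
`μ(g) = det h`. -/
def GZ (p : ℕ) [Fact p.Prime] : Set (MG p) :=
  {x | (∀ i j, ‖x.1 i j‖ ≤ 1) ∧ (∀ i j, ‖x.2 i j‖ ≤ 1) ∧
    ‖x.1.det‖ = 1 ∧ ‖x.2.det‖ = 1 ∧
    x.1.transpose * Jmat p * x.1 = x.2.det • Jmat p}

/-- The subgroup `K_{m,n}` of `G(ℤ_ℓ)`: pairs `(g, h)` with `μ(g) ≡ 1 (mod ℓ^m)` and the
entries of `g` at positions (2,1), (3,1), (4,1), (4,2), (4,3) divisible by `ℓⁿ`. -/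
def Kmn (p : ℕ) [Fact p.Prime] (m n : ℕ) : Set (MG p) :=
  {x ∈ GZ p | ‖x.2.det - 1‖ ≤ (p : ℝ) ^ (-(m : ℤ)) ∧
    ‖x.1 1 0‖ ≤ (p : ℝ) ^ (-(n : ℤ)) ∧ ‖x.1 2 0‖ ≤ (p : ℝ) ^ (-(n : ℤ)) ∧
    ‖x.1 3 0‖ ≤ (p : ℝ) ^ (-(n : ℤ)) ∧ ‖x.1 3 1‖ ≤ (p : ℝ) ^ (-(n : ℤ)) ∧
    ‖x.1 3 2‖ ≤ (p : ℝ) ^ (-(n : ℤ))}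

/-- The element `u = (diag(ℓ^{a₁}, ℓ^{a₂}, ℓ^{a₃}, ℓ^{a₄}), diag(ℓ^{b₁}, ℓ^{b₂}))`. -/
def uElt (p : ℕ) [Fact p.Prime] (a₁ a₂ a₃ a₄ b₁ b₂ : ℕ) : MG p :=
  (Matrix.diagonal ![(p : ℚ_[p]) ^ a₁, (p : ℚ_[p]) ^ a₂, (p : ℚ_[p]) ^ a₃,
      (p : ℚ_[p]) ^ a₄],
    Matrix.diagonal ![(p : ℚ_[p]) ^ b₁, (p : ℚ_[p]) ^ b₂])

/-- The inverse `u⁻¹ = (diag(ℓ^{-a₁}, ℓ^{-a₂}, ℓ^{-a₃}, ℓ^{-a₄}), diag(ℓ^{-b₁}, ℓ^{-b₂}))`. -/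
def uEltInv (p : ℕ) [Fact p.Prime] (a₁ a₂ a₃ a₄ b₁ b₂ : ℕ) : MG p :=
  (Matrix.diagonal ![(p : ℚ_[p]) ^ (-(a₁ : ℤ)), (p : ℚ_[p]) ^ (-(a₂ : ℤ)),
      (p : ℚ_[p]) ^ (-(a₃ : ℤ)), (p : ℚ_[p]) ^ (-(a₄ : ℤ))],
    Matrix.diagonal ![(p : ℚ_[p]) ^ (-(b₁ : ℤ)), (p : ℚ_[p]) ^ (-(b₂ : ℤ))])

/-!
Conjugation `x ↦ u⁻¹ x u` multiplies the `(i, j)` entry of the `GSp₄` component by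
`ℓ^{a_j - a_i}` and does not change `det h`. At the five positions constrained in `K_{m,n}`
we have `i > j`, so `a_i ≤ a_j` and the conjugated entry is at least as divisible by `ℓ`
as the original one.
-/

section Conjugation

variable (p : ℕ) [Fact p.Prime] (a₁ a₂ a₃ a₄ b₁ b₂ : ℕ)

lemma Padic.norm_zpow_neg_mul_mul_pow_le {a b : ℕ} (hab : a ≤ b) (q : ℚ_[p]) :
    ‖(p : ℚ_[p]) ^ (-(a : ℤ)) * q * (p : ℚ_[p]) ^ b‖ ≤ ‖q‖ := by
  have hp : (1 : ℝ) < p := by exact_mod_cast (Fact.out : p.Prime).one_lt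
  rw [norm_mul, norm_mul, Padic.norm_p_zpow, Padic.norm_p_pow, neg_neg,
    mul_right_comm, ← zpow_add₀ (by positivity)]
  exact mul_le_of_le_one_left (norm_nonneg q) (zpow_le_one_of_nonpos₀ hp.le (by omega))

lemma det_snd_uEltInv_mul_mul_uElt (k : MG p) :
    (uEltInv p a₁ a₂ a₃ a₄ b₁ b₂ * k * uElt p a₁ a₂ a₃ a₄ b₁ b₂).2.det = k.2.det := by
  have hp : (p : ℚ_[p]) ≠ 0 := by exact_mod_cast (Fact.out : p.Prime).ne_zero
  simp only [uEltInv, uElt, Prod.snd_mul, Matrix.det_mul, Matrix.det_diagonal,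
    Fin.prod_univ_two, Matrix.cons_val_zero, Matrix.cons_val_one,
    zpow_neg, zpow_natCast]
  field_simp

lemma fst_uEltInv_mul_mul_uElt_apply (k : MG p) (i j : Fin 4) :
    (uEltInv p a₁ a₂ a₃ a₄ b₁ b₂ * k * uElt p a₁ a₂ a₃ a₄ b₁ b₂).1 i j =
      (p : ℚ_[p]) ^ (-((![a₁, a₂, a₃, a₄] i : ℕ) : ℤ)) * k.1 i j *
        (p : ℚ_[p]) ^ (![a₁, a₂, a₃, a₄] j) := by
  have hinv : (uEltInv p a₁ a₂ a₃ a₄ b₁ b₂).1 =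
      Matrix.diagonal fun i ↦ (p : ℚ_[p]) ^ (-((![a₁, a₂, a₃, a₄] i : ℕ) : ℤ)) := by
    refine congrArg Matrix.diagonal (funext fun i ↦ ?_)
    fin_cases i <;> rfl
  have hu : (uElt p a₁ a₂ a₃ a₄ b₁ b₂).1 =
      Matrix.diagonal fun i ↦ (p : ℚ_[p]) ^ (![a₁, a₂, a₃, a₄] i) := by
    refine congrArg Matrix.diagonal (funext fun i ↦ ?_)
    fin_cases i <;> rfl
  rw [Prod.fst_mul, Prod.fst_mul, hinv, hu, Matrix.mul_diagonal, Matrix.diagonal_mul]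

lemma norm_fst_uEltInv_mul_mul_uElt_apply_le (k : MG p) {i j : Fin 4}
    (hij : ![a₁, a₂, a₃, a₄] i ≤ ![a₁, a₂, a₃, a₄] j) :
    ‖(uEltInv p a₁ a₂ a₃ a₄ b₁ b₂ * k * uElt p a₁ a₂ a₃ a₄ b₁ b₂).1 i j‖ ≤ ‖k.1 i j‖ := by
  rw [fst_uEltInv_mul_mul_uElt_apply]
  exact Padic.norm_zpow_neg_mul_mul_pow_le p hij _

end Conjugation

theorem stmt11_general (p : ℕ) [Fact p.Prime] (m n : ℕ) (a₁ a₂ a₃ a₄ b₁ b₂ : ℕ)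
    (h12 : a₂ ≤ a₁) (h23 : a₃ ≤ a₂) (h34 : a₄ ≤ a₃) :
    (({uEltInv p a₁ a₂ a₃ a₄ b₁ b₂} : Set (MG p)) * Kmn p m n *
        {uElt p a₁ a₂ a₃ a₄ b₁ b₂}) ∩ GZ p ⊆ Kmn p m n := by
  rintro _ ⟨⟨_, ⟨_, rfl, k, hk, rfl⟩, _, rfl, rfl⟩, hxGZ⟩
  obtain ⟨-, hdet, h10, h20, h30, h31, h32⟩ := hk
  have hconj {i j : Fin 4} (hij : ![a₁, a₂, a₃, a₄] i ≤ ![a₁, a₂, a₃, a₄] j) :=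
    norm_fst_uEltInv_mul_mul_uElt_apply_le p a₁ a₂ a₃ a₄ b₁ b₂ k hij
  refine ⟨hxGZ, ?_, (hconj (i := 1) (j := 0) h12).trans h10,
    (hconj (i := 2) (j := 0) (h23.trans h12)).trans h20,
    (hconj (i := 3) (j := 0) (h34.trans (h23.trans h12))).trans h30,
    (hconj (i := 3) (j := 1) (h34.trans h23)).trans h31,
    (hconj (i := 3) (j := 2) h34).trans h32⟩
  rwa [det_snd_uEltInv_mul_mul_uElt]

/-- For `u` an antidominant-type diagonal element of `G(ℚ_ℓ)`,
`u⁻¹ · K_{m,n} · u ∩ G(ℤ_ℓ) ⊆ K_{m,n}`. -/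
theorem stmt11 (p : ℕ) [Fact p.Prime] (m n : ℕ) (a₁ a₂ a₃ a₄ b₁ b₂ : ℕ)
    (h12 : a₂ ≤ a₁) (h23 : a₃ ≤ a₂) (h34 : a₄ ≤ a₃)
    (hsum1 : a₁ + a₄ = a₂ + a₃) (hsum2 : a₂ + a₃ = b₁ + b₂) :
    (({uEltInv p a₁ a₂ a₃ a₄ b₁ b₂} : Set (MG p)) * Kmn p m n *
        {uElt p a₁ a₂ a₃ a₄ b₁ b₂}) ∩ GZ p ⊆ Kmn p m n :=
  stmt11_general p m n a₁ a₂ a₃ a₄ b₁ b₂ h12 h23 h34
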